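/- Let m ≥ 1, let c_1, c_2, c_3 be nonzero reals, and for k = 1,2,3 let a_k, b_k be tuples of reals of lengths i_k, j_k such that m·(a_k)_s is not a nonnegative integer for every entry. Suppose that, as formal power series in x, F_{j_1,i_1}(−m b_1; −m a_1; c_1 x) · F_{j_2,i_2}(−m b_2; −m a_2; c_2 x) = F_{j_3,i_3}(−m b_3; −m a_3; c_3 x). For k = 1,2,3 let s_k be a complex number with s_k² = c_k (−1)^{i_k+j_k+1}. Then Dil_{s_1} H^E_m[b_1, 1−1/(2m); a_1] ⊞_{2m} Dil_{s_2} H^E_m[b_2, 1−1/(2m); a_2] = Dil_{s_3} H^E_m[b_3, 1−1/(2m); a_3]. -/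

import Mathlib

open Polynomial Finset

noncomputable section

namespace FFP

/-- Coefficient `e_k(p)` defined by `p(x) = Σ (-1)^k e_k(p) x^(n-k)`. -/
def eC (n k : ℕ) (p : Polynomial ℂ) : ℂ := (-1) ^ k * p.coeff (n - k)

/-- Falling factorial `x(x-1)⋯(x-k+1)`. -/
def ffa (x : ℂ) (k : ℕ) : ℂ := ∏ i ∈ Finset.range k, (x - i)

/-- Rising factorial `x(x+1)⋯(x+k-1)`. -/
def rfa (x : ℂ) (k : ℕ) : ℂ := ∏ i ∈ Finset.range k, (x + i)

/-- Monic polynomial of degree `n` from prescribed `e_k` coefficients. -/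
def ofE (n : ℕ) (f : ℕ → ℂ) : Polynomial ℂ :=
  ∑ k ∈ Finset.range (n + 1), Polynomial.C ((-1) ^ k * f k) * Polynomial.X ^ (n - k)

/-- Finite free additive convolution. -/
def boxplus (n : ℕ) (p q : Polynomial ℂ) : Polynomial ℂ :=
  ofE n fun k => ffa (n : ℂ) k * ∑ ij ∈ Finset.HasAntidiagonal.antidiagonal k,
    eC n ij.1 p * eC n ij.2 q / (ffa (n : ℂ) ij.1 * ffa (n : ℂ) ij.2)

/-- Finite free multiplicative convolution. -/
def boxtimes (n : ℕ) (p q : Polynomial ℂ) : Polynomial ℂ :=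
  ofE n fun k => eC n k p * eC n k q / (n.choose k : ℂ)

/-- Dilation: `(dil n α p)(x) = α^n p(x/α)` for polynomials of degree ≤ n. -/
def dil (n : ℕ) (α : ℂ) (p : Polynomial ℂ) : Polynomial ℂ :=
  ∑ j ∈ Finset.range (n + 1), Polynomial.C (α ^ (n - j) * p.coeff j) * Polynomial.X ^ j

/-- Symmetrization. -/
def sym (n : ℕ) (p : Polynomial ℂ) : Polynomial ℂ := boxplus n p (dil n (-1) p)

/-- Degree halving operation. -/
def Qm (m : ℕ) (p : Polynomial ℂ) : Polynomial ℂ :=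
  ofE m fun k => (-1) ^ k * eC (2 * m) (2 * k) p

/-- Degree doubling operation. -/
def Sm (p : Polynomial ℂ) : Polynomial ℂ := p.comp (Polynomial.X ^ 2)

/-- Hypergeometric polynomial `H_n[b; a]`. -/
def hyp (n : ℕ) {j i : ℕ} (b : Fin j → ℝ) (a : Fin i → ℝ) : Polynomial ℂ :=
  ofE n fun k =>
    (n.choose k : ℂ) * (∏ t, ffa ((n : ℂ) * (b t : ℂ)) k) / ∏ s, ffa ((n : ℂ) * (a s : ℂ)) k

/-- Even hypergeometric polynomial `H^E_m[b; a](x) = H_m[b; a](x²)`. -/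
def hypE (m : ℕ) {j i : ℕ} (b : Fin j → ℝ) (a : Fin i → ℝ) : Polynomial ℂ :=
  (hyp m b a).comp (Polynomial.X ^ 2)

/-- A monic polynomial of degree `2m` is even: all odd `e`-coefficients vanish. -/
def IsEvenP (m : ℕ) (p : Polynomial ℂ) : Prop :=
  ∀ k ≤ 2 * m, Odd k → eC (2 * m) k p = 0

/-- The generalized hypergeometric series `F_{j,i}(u; v; c·x^l)` as a formal power
series in `x`. -/
def hgSub {i j : ℕ} (u : Fin j → ℝ) (v : Fin i → ℝ) (c : ℝ) (l : ℕ) : PowerSeries ℂ :=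
  PowerSeries.mk fun n =>
    if l ∣ n then
      (∏ t, rfa ((u t : ℂ)) (n / l)) /
          ((∏ s, rfa ((v s : ℂ)) (n / l)) * ((n / l).factorial : ℂ)) * (c : ℂ) ^ (n / l)
    else 0



lemma ffa_succ (x : ℂ) (k : ℕ) : ffa x (k+1) = ffa x k * (x - k) := Finset.prod_range_succ _ _
lemma rfa_succ (x : ℂ) (k : ℕ) : rfa x (k+1) = rfa x k * (x + k) := Finset.prod_range_succ _ _

lemma ffa_eq_neg_rfa (x : ℂ) (k : ℕ) : ffa x k = (-1)^k * rfa (-x) k := by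
  induction k with
  | zero => simp [ffa, rfa]
  | succ k ih => rw [ffa_succ, rfa_succ, ih]; ring

lemma ffa_nat (m : ℕ) : ∀ p : ℕ, ffa (m:ℂ) p = (m.descFactorial p : ℂ) := by
  intro p
  induction p with
  | zero => simp [ffa]
  | succ p ih =>
    rw [ffa_succ, ih, Nat.descFactorial_succ]
    by_cases h : p ≤ m
    · push_cast [h]; ring
    · have h1 : m.descFactorial p = 0 := Nat.descFactorial_eq_zero_iff_lt.mpr (by omega)
      have h2 : m - p = 0 := by omega
      simp [h1, h2]

lemma ffa_nat_choose (m p : ℕ) : ffa (m:ℂ) p = (p.factorial : ℂ) * (m.choose p : ℂ) := by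
  rw [ffa_nat m p, Nat.descFactorial_eq_factorial_mul_choose]; push_cast; ring

lemma ffa_two_mul (m p : ℕ) :
    ffa ((2*m : ℕ) : ℂ) (2*p) = 4^p * ffa (m:ℂ) p * ffa ((m:ℂ) - 1/2) p := by
  induction p with
  | zero => simp [ffa]
  | succ p ih =>
    have h2 : 2*(p+1) = (2*p) + 1 + 1 := by ring
    rw [h2, ffa_succ, ffa_succ, ih, ffa_succ, ffa_succ]
    push_cast
    ring

lemma ffa_nat_ne_zero {m p : ℕ} (h : p ≤ m) : ffa (m:ℂ) p ≠ 0 := by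
  rw [ffa]
  apply Finset.prod_ne_zero_iff.mpr
  intro k hk
  have : k < m := lt_of_lt_of_le (Finset.mem_range.mp hk) h
  have h2 : (k:ℂ) ≠ (m:ℂ) := by exact_mod_cast this.ne
  exact sub_ne_zero.mpr (fun he => h2 (by linear_combination -he))

lemma rfa_ne_zero_of_ha (m : ℕ) (x : ℝ) (hx : ∀ k : ℕ, (m:ℝ) * x ≠ k) (r : ℕ) :
    rfa (-((m:ℂ) * (x:ℂ))) r ≠ 0 := by
  rw [rfa]
  apply Finset.prod_ne_zero_iff.mpr
  intro k hk he
  apply hx k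
  have : ((m:ℝ) * x : ℂ) = ((k:ℝ) : ℂ) := by push_cast; linear_combination -he
  exact_mod_cast this

lemma coeff_ofE (n : ℕ) (f : ℕ → ℂ) (d : ℕ) :
    (ofE n f).coeff d = if d ≤ n then (-1)^(n-d) * f (n-d) else 0 := by
  rw [ofE, Polynomial.finset_sum_coeff]
  simp only [Polynomial.coeff_C_mul, Polynomial.coeff_X_pow]
  by_cases hd : d ≤ n
  · rw [if_pos hd, Finset.sum_eq_single (n - d)]
    · rw [if_pos (by omega)]; ring
    · intro k hk hne
      rw [Finset.mem_range] at hk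
      rw [if_neg (by omega), mul_zero]
    · intro h; exact absurd (Finset.mem_range.mpr (by omega)) h
  · rw [if_neg hd]
    apply Finset.sum_eq_zero
    intro k hk
    rw [Finset.mem_range] at hk
    rw [if_neg (by omega), mul_zero]

lemma coeff_dil (n : ℕ) (α : ℂ) (p : Polynomial ℂ) (d : ℕ) :
    (dil n α p).coeff d = if d ≤ n then α^(n-d) * p.coeff d else 0 := by
  rw [dil, Polynomial.finset_sum_coeff]
  simp only [Polynomial.coeff_C_mul, Polynomial.coeff_X_pow]
  by_cases hd : d ≤ n
  · rw [if_pos hd, Finset.sum_eq_single d]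
    · rw [if_pos rfl]; ring
    · intro k hk hne; rw [if_neg (fun h => hne h.symm), mul_zero]
    · intro h; exact absurd (Finset.mem_range.mpr (by omega)) h
  · rw [if_neg hd]
    apply Finset.sum_eq_zero
    intro k hk
    rw [Finset.mem_range] at hk
    rw [if_neg (by omega), mul_zero]

lemma coeff_ofE_comp_sq (n : ℕ) (f : ℕ → ℂ) (d : ℕ) :
    ((ofE n f).comp (Polynomial.X ^ 2)).coeff d =
      if d ≤ 2*n ∧ 2 ∣ d then (-1)^(n - d/2) * f (n - d/2) else 0 := by
  have hcomp : (ofE n f).comp (Polynomial.X ^ 2) =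
      ∑ k ∈ Finset.range (n + 1), Polynomial.C ((-1) ^ k * f k) * Polynomial.X ^ (2*(n - k)) := by
    rw [ofE, Polynomial.comp, Polynomial.eval₂_finset_sum]
    apply Finset.sum_congr rfl
    intro k _
    rw [Polynomial.eval₂_mul, Polynomial.eval₂_C, Polynomial.eval₂_X_pow, ← pow_mul]
  rw [hcomp, Polynomial.finset_sum_coeff]
  simp only [Polynomial.coeff_C_mul, Polynomial.coeff_X_pow]
  by_cases hd : d ≤ 2*n ∧ 2 ∣ d
  · rw [if_pos hd]
    obtain ⟨hd1, r, hr⟩ := hd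
    rw [Finset.sum_eq_single (n - d/2)]
    · rw [if_pos (by omega)]; ring
    · intro k hk hne
      rw [Finset.mem_range] at hk
      rw [if_neg (by omega), mul_zero]
    · intro h; exact absurd (Finset.mem_range.mpr (by omega)) h
  · rw [if_neg hd]
    apply Finset.sum_eq_zero
    intro k hk
    rw [Finset.mem_range] at hk
    rw [if_neg, mul_zero]
    intro he
    exact hd ⟨by omega, ⟨n - k, by omega⟩⟩

lemma coeff_hgSub {i j : ℕ} (u : Fin j → ℝ) (v : Fin i → ℝ) (c : ℝ) (n : ℕ) :
    PowerSeries.coeff n (hgSub u v c 1) =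
      (∏ t, rfa ((u t : ℂ)) n) / ((∏ s, rfa ((v s : ℂ)) n) * (n.factorial : ℂ)) * (c:ℂ)^n := by
  rw [hgSub, PowerSeries.coeff_mk, if_pos (one_dvd n), Nat.div_one]

lemma crux (m : ℕ) (hm : 1 ≤ m) (c : ℝ) {i j : ℕ} (a : Fin i → ℝ) (b : Fin j → ℝ)
    (ha : ∀ s, ∀ k : ℕ, (m : ℝ) * a s ≠ k) (r : ℕ) :
    ((c:ℂ) * (-1)^(i+j+1))^r * ((-1):ℂ)^r *
      ((m.choose r : ℂ) * (∏ t, ffa ((m:ℂ) * (((Fin.append b ![1 - 1/(2*(m:ℝ))]) t : ℝ) : ℂ)) r) /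
        ∏ s, ffa ((m:ℂ) * ((a s : ℝ) : ℂ)) r)
    = ffa ((2*m : ℕ) : ℂ) (2*r) * (1/4 : ℂ)^r *
      ((∏ t, rfa (((-(m:ℝ) * b t : ℝ)) : ℂ) r) /
        ((∏ s, rfa (((-(m:ℝ) * a s : ℝ)) : ℂ) r) * (r.factorial : ℂ)) * (c:ℂ)^r) := by
  have hm0 : (m:ℂ) ≠ 0 := Nat.cast_ne_zero.mpr (by omega)
  have hsplit : (∏ t, ffa ((m:ℂ) * (((Fin.append b ![1 - 1/(2*(m:ℝ))]) t : ℝ) : ℂ)) r)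
      = (∏ t : Fin j, ffa ((m:ℂ) * ((b t : ℝ) : ℂ)) r) * ffa ((m:ℂ) - 1/2) r := by
    rw [Fin.prod_univ_add (fun t => ffa ((m:ℂ) * (((Fin.append b ![1 - 1/(2*(m:ℝ))]) t : ℝ) : ℂ)) r)]
    congr 1
    · exact Finset.prod_congr rfl fun t _ => by rw [Fin.append_left]
    · rw [Fin.prod_univ_one, Fin.append_right]
      congr 1
      have : ((1 - 1/(2*(m:ℝ)) : ℝ) : ℂ) = 1 - 1/(2*(m:ℂ)) := by push_cast; ring
      rw [Matrix.cons_val_zero, this]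
      field_simp
  rw [hsplit]
  have hb : (∏ t : Fin j, ffa ((m:ℂ) * ((b t : ℝ) : ℂ)) r)
      = ((-1:ℂ)^r)^j * ∏ t : Fin j, rfa (((-(m:ℝ) * b t : ℝ)) : ℂ) r := by
    calc (∏ t : Fin j, ffa ((m:ℂ) * ((b t : ℝ) : ℂ)) r)
        = ∏ t : Fin j, ((-1:ℂ)^r * rfa (((-(m:ℝ) * b t : ℝ)) : ℂ) r) := by
          refine Finset.prod_congr rfl fun t _ => ?_
          rw [ffa_eq_neg_rfa]
          congr 2
          push_cast; ring
      _ = _ := by rw [Finset.prod_mul_distrib, Finset.prod_const]; simp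
  have haa : (∏ s : Fin i, ffa ((m:ℂ) * ((a s : ℝ) : ℂ)) r)
      = ((-1:ℂ)^r)^i * ∏ s : Fin i, rfa (((-(m:ℝ) * a s : ℝ)) : ℂ) r := by
    calc (∏ s : Fin i, ffa ((m:ℂ) * ((a s : ℝ) : ℂ)) r)
        = ∏ s : Fin i, ((-1:ℂ)^r * rfa (((-(m:ℝ) * a s : ℝ)) : ℂ) r) := by
          refine Finset.prod_congr rfl fun s _ => ?_
          rw [ffa_eq_neg_rfa]
          congr 2
          push_cast; ring
      _ = _ := by rw [Finset.prod_mul_distrib, Finset.prod_const]; simp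
  rw [hb, haa, ffa_two_mul, ffa_nat_choose]
  have hY : (∏ s : Fin i, rfa (((-(m:ℝ) * a s : ℝ)) : ℂ) r) ≠ 0 := by
    apply Finset.prod_ne_zero_iff.mpr
    intro s _
    have := rfa_ne_zero_of_ha m (a s) (ha s) r
    convert this using 2
    push_cast; ring
  have hfac : (r.factorial : ℂ) ≠ 0 := Nat.cast_ne_zero.mpr r.factorial_ne_zero
  set X := ∏ t : Fin j, rfa (((-(m:ℝ) * b t : ℝ)) : ℂ) r with hX
  set Y := ∏ s : Fin i, rfa (((-(m:ℝ) * a s : ℝ)) : ℂ) r with hYdef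
  set H := ffa ((m:ℂ) - 1/2) r with hH
  set e := ((-1:ℂ))^r with he
  have he0 : e ≠ 0 := pow_ne_zero _ (by norm_num)
  have hδ : ((-1:ℂ)^(i+j+1))^r = e^(i+j+1) := by rw [he, ← pow_mul, ← pow_mul, mul_comm]
  have hE : e^(2*(j+1)) = 1 := by
    rw [he, ← pow_mul]
    exact Even.neg_one_pow ⟨r*(j+1), by ring⟩
  rw [mul_pow, hδ]
  field_simp
  have h14 : (1/4:ℂ)^r * 4^r = 1 := by rw [← mul_pow]; norm_num
  linear_combination ((c:ℂ) ^ r * (m.choose r : ℂ) * X * H * e^i) * hE - ((c:ℂ) ^ r * (m.choose r : ℂ) * X * H * e^i) * h14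

lemma master (m : ℕ) (hm : 1 ≤ m) (c : ℝ) {i j : ℕ} (a : Fin i → ℝ) (b : Fin j → ℝ)
    (ha : ∀ s, ∀ k : ℕ, (m : ℝ) * a s ≠ k) (s : ℂ)
    (hs : s ^ 2 = (c : ℂ) * (-1) ^ (i + j + 1)) (p : ℕ) (hp : p ≤ 2*m) :
    eC (2*m) p (dil (2*m) s (hypE m (Fin.append b ![1 - 1/(2*(m:ℝ))]) a)) =
      if 2 ∣ p then ffa ((2*m : ℕ) : ℂ) p * (1/4 : ℂ)^(p/2) *
        PowerSeries.coeff (p/2)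
          (hgSub (fun t => -(m : ℝ) * b t) (fun s => -(m : ℝ) * a s) c 1)
      else 0 := by
  rw [eC, coeff_dil, if_pos (by omega : 2*m - p ≤ 2*m)]
  unfold hypE hyp
  rw [coeff_ofE_comp_sq]
  by_cases hpar : 2 ∣ p
  · obtain ⟨q, rfl⟩ := hpar
    rw [if_pos ⟨by omega, ⟨m - q, by omega⟩⟩, if_pos ⟨q, rfl⟩]
    have h1 : (2*m - 2*q)/2 = m - q := by omega
    have h2 : m - (m - q) = q := by omega
    have h3 : 2*m - (2*m - 2*q) = 2*q := by omega
    have h4 : 2*q/2 = q := by omega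
    rw [h1, h2, h3, h4, coeff_hgSub]
    have h5 := crux m hm c a b ha q
    have h6 : s ^ (2*q) = ((c:ℂ) * (-1)^(i+j+1))^q := by rw [pow_mul, hs]
    have h7 : ((-1:ℂ))^(2*q) = 1 := Even.neg_one_pow ⟨q, by ring⟩
    rw [h6, h7, one_mul]
    calc ((c:ℂ) * (-1)^(i+j+1))^q * ((-1:ℂ)^q *
          ((m.choose q : ℂ) * (∏ t, ffa ((m:ℂ) * (((Fin.append b ![1 - 1/(2*(m:ℝ))]) t : ℝ) : ℂ)) q) /
            ∏ s, ffa ((m:ℂ) * ((a s : ℝ) : ℂ)) q))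
        = ((c:ℂ) * (-1)^(i+j+1))^q * ((-1):ℂ)^q *
          ((m.choose q : ℂ) * (∏ t, ffa ((m:ℂ) * (((Fin.append b ![1 - 1/(2*(m:ℝ))]) t : ℝ) : ℂ)) q) /
            ∏ s, ffa ((m:ℂ) * ((a s : ℝ) : ℂ)) q) := by ring
      _ = _ := by rw [h5]
  · have hcond : ¬(2*m - p ≤ 2*m ∧ 2 ∣ (2*m - p)) := by
      rintro ⟨-, hdvd⟩
      exact hpar (by omega)
    rw [if_neg hpar, if_neg hcond, mul_zero, mul_zero]

/-- additive convolution of even hypergeometric polynomials from a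
product identity of generalized hypergeometric series. -/
theorem stmt12 (m : ℕ) (hm : 1 ≤ m) (c1 c2 c3 : ℝ)
    (hc1 : c1 ≠ 0) (hc2 : c2 ≠ 0) (hc3 : c3 ≠ 0)
    {i1 j1 i2 j2 i3 j3 : ℕ}
    (a1 : Fin i1 → ℝ) (b1 : Fin j1 → ℝ) (a2 : Fin i2 → ℝ) (b2 : Fin j2 → ℝ)
    (a3 : Fin i3 → ℝ) (b3 : Fin j3 → ℝ)
    (ha1 : ∀ s, ∀ k : ℕ, (m : ℝ) * a1 s ≠ k)
    (ha2 : ∀ s, ∀ k : ℕ, (m : ℝ) * a2 s ≠ k)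
    (ha3 : ∀ s, ∀ k : ℕ, (m : ℝ) * a3 s ≠ k)
    (hF : hgSub (fun t => -(m : ℝ) * b1 t) (fun s => -(m : ℝ) * a1 s) c1 1 *
            hgSub (fun t => -(m : ℝ) * b2 t) (fun s => -(m : ℝ) * a2 s) c2 1 =
          hgSub (fun t => -(m : ℝ) * b3 t) (fun s => -(m : ℝ) * a3 s) c3 1)
    (s1 s2 s3 : ℂ)
    (hs1 : s1 ^ 2 = (c1 : ℂ) * (-1) ^ (i1 + j1 + 1))
    (hs2 : s2 ^ 2 = (c2 : ℂ) * (-1) ^ (i2 + j2 + 1))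
    (hs3 : s3 ^ 2 = (c3 : ℂ) * (-1) ^ (i3 + j3 + 1)) :
    boxplus (2 * m)
        (dil (2 * m) s1 (hypE m (Fin.append b1 ![1 - 1 / (2 * (m : ℝ))]) a1))
        (dil (2 * m) s2 (hypE m (Fin.append b2 ![1 - 1 / (2 * (m : ℝ))]) a2)) =
      dil (2 * m) s3 (hypE m (Fin.append b3 ![1 - 1 / (2 * (m : ℝ))]) a3) := by
  apply Polynomial.ext
  intro d
  unfold boxplus
  rw [coeff_ofE, coeff_dil]
  by_cases hd : d ≤ 2*m
  swap
  · rw [if_neg hd, if_neg hd]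
  rw [if_pos hd, if_pos hd]
  have hR : s3 ^ (2*m - d) *
      (hypE m (Fin.append b3 ![1 - 1/(2*(m:ℝ))]) a3).coeff d
      = (-1:ℂ)^(2*m-d) * eC (2*m) (2*m-d)
          (dil (2*m) s3 (hypE m (Fin.append b3 ![1 - 1/(2*(m:ℝ))]) a3)) := by
    rw [eC]
    have h1 : 2*m - (2*m - d) = d := by omega
    rw [h1, coeff_dil, if_pos hd, ← mul_assoc]
    have h2 : (-1:ℂ)^(2*m-d) * (-1:ℂ)^(2*m-d) = 1 := by
      rw [← mul_pow]; norm_num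
    rw [h2, one_mul]
  rw [hR, master m hm c3 a3 b3 ha3 s3 hs3 (2*m-d) (by omega)]
  congr 1
  by_cases hpar : 2 ∣ (2*m - d)
  · obtain ⟨r, hr⟩ := hpar
    rw [if_pos ⟨r, hr⟩, hr]
    have hrm : r ≤ m := by omega
    have h4 : 2*r/2 = r := by omega
    rw [h4, mul_assoc]
    congr 1
    rw [Finset.Nat.sum_antidiagonal_eq_sum_range_succ_mk]
    have hreduce : ∑ p ∈ Finset.range (2*r+1),
        (eC (2*m) p (dil (2*m) s1 (hypE m (Fin.append b1 ![1 - 1/(2*(m:ℝ))]) a1)) *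
          eC (2*m) (2*r - p) (dil (2*m) s2 (hypE m (Fin.append b2 ![1 - 1/(2*(m:ℝ))]) a2)) /
          (ffa ((2*m : ℕ) : ℂ) p * ffa ((2*m : ℕ) : ℂ) (2*r - p)))
        = ∑ p ∈ Finset.range (r+1),
        (eC (2*m) (2*p) (dil (2*m) s1 (hypE m (Fin.append b1 ![1 - 1/(2*(m:ℝ))]) a1)) *
          eC (2*m) (2*r - 2*p) (dil (2*m) s2 (hypE m (Fin.append b2 ![1 - 1/(2*(m:ℝ))]) a2)) /
          (ffa ((2*m : ℕ) : ℂ) (2*p) * ffa ((2*m : ℕ) : ℂ) (2*r - 2*p))) := by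
      calc _ = ∑ p ∈ (Finset.range (r+1)).image (fun p => 2*p),
            (eC (2*m) p (dil (2*m) s1 (hypE m (Fin.append b1 ![1 - 1/(2*(m:ℝ))]) a1)) *
              eC (2*m) (2*r - p) (dil (2*m) s2 (hypE m (Fin.append b2 ![1 - 1/(2*(m:ℝ))]) a2)) /
              (ffa ((2*m : ℕ) : ℂ) p * ffa ((2*m : ℕ) : ℂ) (2*r - p))) := by
            refine (Finset.sum_subset ?_ ?_).symm
            · intro x hx
              obtain ⟨p, hp, rfl⟩ := Finset.mem_image.mp hx
              rw [Finset.mem_range] at hp ⊢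
              omega
            · intro x hx hnx
              rw [Finset.mem_range] at hx
              have hodd : ¬ 2 ∣ x := by
                intro ⟨y, hy⟩
                exact hnx (Finset.mem_image.mpr ⟨y, Finset.mem_range.mpr (by omega), by omega⟩)
              rw [master m hm c1 a1 b1 ha1 s1 hs1 x (by omega), if_neg hodd, zero_mul, zero_div]
        _ = _ := Finset.sum_image (fun x _ y _ hxy => by omega)
    rw [hreduce]
    have hterm : ∀ p ∈ Finset.range (r+1),
        (eC (2*m) (2*p) (dil (2*m) s1 (hypE m (Fin.append b1 ![1 - 1/(2*(m:ℝ))]) a1)) *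
          eC (2*m) (2*r - 2*p) (dil (2*m) s2 (hypE m (Fin.append b2 ![1 - 1/(2*(m:ℝ))]) a2)) /
          (ffa ((2*m : ℕ) : ℂ) (2*p) * ffa ((2*m : ℕ) : ℂ) (2*r - 2*p)))
        = (1/4:ℂ)^r * (PowerSeries.coeff p
            (hgSub (fun t => -(m : ℝ) * b1 t) (fun s => -(m : ℝ) * a1 s) c1 1) *
          PowerSeries.coeff (r - p)
            (hgSub (fun t => -(m : ℝ) * b2 t) (fun s => -(m : ℝ) * a2 s) c2 1)) := by
      intro p hp
      rw [Finset.mem_range] at hp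
      have hp' : p ≤ r := by omega
      have h5 : 2*r - 2*p = 2*(r-p) := by omega
      rw [h5, master m hm c1 a1 b1 ha1 s1 hs1 (2*p) (by omega),
        master m hm c2 a2 b2 ha2 s2 hs2 (2*(r-p)) (by omega),
        if_pos ⟨p, rfl⟩, if_pos ⟨r-p, rfl⟩]
      have h6 : 2*p/2 = p := by omega
      have h7 : 2*(r-p)/2 = r - p := by omega
      rw [h6, h7]
      have hf1 : ffa ((2*m : ℕ) : ℂ) (2*p) ≠ 0 := ffa_nat_ne_zero (by omega)
      have hf2 : ffa ((2*m : ℕ) : ℂ) (2*(r-p)) ≠ 0 := ffa_nat_ne_zero (by omega)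
      rw [div_eq_iff (mul_ne_zero hf1 hf2)]
      have h8 : (1/4:ℂ)^p * (1/4:ℂ)^(r-p) = (1/4:ℂ)^r := by
        rw [← pow_add]
        congr 1
        omega
      linear_combination (ffa ((2*m : ℕ) : ℂ) (2*p) * ffa ((2*m : ℕ) : ℂ) (2*(r-p)) *
        PowerSeries.coeff p
            (hgSub (fun t => -(m : ℝ) * b1 t) (fun s => -(m : ℝ) * a1 s) c1 1) *
        PowerSeries.coeff (r - p)
            (hgSub (fun t => -(m : ℝ) * b2 t) (fun s => -(m : ℝ) * a2 s) c2 1)) * h8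
    rw [Finset.sum_congr rfl hterm, ← Finset.mul_sum]
    congr 1
    rw [← Finset.Nat.sum_antidiagonal_eq_sum_range_succ_mk
      (fun ij => PowerSeries.coeff ij.1
            (hgSub (fun t => -(m : ℝ) * b1 t) (fun s => -(m : ℝ) * a1 s) c1 1) *
          PowerSeries.coeff ij.2
            (hgSub (fun t => -(m : ℝ) * b2 t) (fun s => -(m : ℝ) * a2 s) c2 1)),
      ← PowerSeries.coeff_mul, hF]
  · rw [if_neg hpar]
    rw [show (0:ℂ) = ffa ((2*m : ℕ) : ℂ) (2*m-d) * 0 from (mul_zero _).symm]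
    congr 1
    apply Finset.sum_eq_zero
    intro ij hij
    have hij' := Finset.HasAntidiagonal.mem_antidiagonal.mp hij
    by_cases h1 : 2 ∣ ij.1
    · have h2 : ¬ 2 ∣ ij.2 := by
        intro h2
        exact hpar (by omega)
      rw [master m hm c2 a2 b2 ha2 s2 hs2 ij.2 (by omega), if_neg h2, mul_zero, zero_div]
    · rw [master m hm c1 a1 b1 ha1 s1 hs1 ij.1 (by omega), if_neg h1, zero_mul, zero_div]


end FFP
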